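/- If T is an analytic bounded operator on a nonzero Hilbert space (i.e., the intersection of the ranges of all powers T^n is {0}) and σ_ap(T) ⊆ ∂𝔻, then T is completely non-normal, i.e., T has no nonzero reducing subspace on which it is normal. -/

import Mathlib

/-!
Since `0 ∉ σ_ap(T)`, `T` is bounded below, so it maps closed subspaces onto closed subspaces.
On a reducing subspace `M` where `T` is normal, `‖T† x‖ = ‖T x‖`, so `T†` is injective on `M`;
hence `M ⊖ T(M) = 0`, i.e. `T(M) = M`. Iterating, `M ⊆ ran Tⁿ` for every `n`, and analyticity
gives `M = 0`.
-/

open ContinuousLinearMap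

/-- The approximate point spectrum: `z` such that `T - z·I` is not bounded below. -/
def approxPointSpectrum {H : Type*} [NormedAddCommGroup H] [InnerProductSpace ℂ H]
    [CompleteSpace H] (T : H →L[ℂ] H) : Set ℂ :=
  {z | ¬ ∃ c : ℝ, 0 < c ∧ ∀ x : H, c * ‖x‖ ≤ ‖(T - z • (1 : H →L[ℂ] H)) x‖}

open scoped InnerProductSpace

theorem Submodule.le_range_pow_of_le_map {R M : Type*} [Semiring R] [AddCommMonoid M]
    [Module R M] {p : Submodule R M} {f : Module.End R M} (h : p ≤ p.map f) (n : ℕ) :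
    p ≤ LinearMap.range (f ^ n) := by
  have hmap : p ≤ p.map (f ^ n) := by
    induction n with
    | zero => rw [pow_zero, Module.End.one_eq_id, Submodule.map_id]
    | succ n ih =>
      calc p ≤ p.map f := h
        _ ≤ (p.map (f ^ n)).map f := Submodule.map_mono ih
        _ = p.map (f ^ (n + 1)) := by rw [← Submodule.map_comp, pow_succ', Module.End.mul_eq_comp]
  exact hmap.trans LinearMap.map_le_range

theorem exists_bound_below_of_zero_notMem_approxPointSpectrum {H : Type*}
    [NormedAddCommGroup H] [InnerProductSpace ℂ H] [CompleteSpace H] {T : H →L[ℂ] H}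
    (h : 0 ∉ approxPointSpectrum T) : ∃ c : ℝ, 0 < c ∧ ∀ x : H, c * ‖x‖ ≤ ‖T x‖ := by
  simpa [approxPointSpectrum] using h

section

variable {𝕜 E H : Type*} [RCLike 𝕜] [NormedAddCommGroup E] [NormedSpace 𝕜 E] [CompleteSpace E]
  [NormedAddCommGroup H] [InnerProductSpace 𝕜 H] [CompleteSpace H]

theorem ContinuousLinearMap.isClosedEmbedding_of_bound_below (T : E →L[𝕜] E) {c : ℝ}
    (hc : 0 < c) (hT : ∀ x, c * ‖x‖ ≤ ‖T x‖) : Topology.IsClosedEmbedding T := by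
  refine (T.antilipschitz_of_bound (K := ⟨c⁻¹, inv_nonneg.2 hc.le⟩) fun x ↦ ?_).isClosedEmbedding
    T.uniformContinuous
  show ‖x‖ ≤ c⁻¹ * ‖T x‖
  rw [inv_mul_eq_div, le_div_iff₀ hc, mul_comm]
  exact hT x

theorem ContinuousLinearMap.norm_adjoint_apply_eq_norm_apply {T : H →L[𝕜] H} {x : H}
    (hx : adjoint T (T x) = T (adjoint T x)) : ‖adjoint T x‖ = ‖T x‖ := by
  have h : ⟪T x, T x⟫_𝕜 = ⟪adjoint T x, adjoint T x⟫_𝕜 := by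
    rw [← adjoint_inner_right, hx, adjoint_inner_left]
  rw [inner_self_eq_norm_sq_to_K, inner_self_eq_norm_sq_to_K] at h
  exact ((sq_eq_sq₀ (norm_nonneg _) (norm_nonneg _)).mp (by exact_mod_cast h)).symm

/- A vector `y` of `M ⊖ T(M)` is killed by `T†`, since `‖T† y‖² = ⟪T T† y, y⟫ = 0`. -/
theorem Submodule.le_map_of_isClosed_map_of_adjoint_injOn {T : H →L[𝕜] H} {M : Submodule 𝕜 H}
    (hcl : IsClosed (M.map (T : H →ₗ[𝕜] H) : Set H)) (hTM : ∀ x ∈ M, T x ∈ M)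
    (hT'M : ∀ x ∈ M, adjoint T x ∈ M) (hker : ∀ y ∈ M, adjoint T y = 0 → y = 0) :
    M ≤ M.map (T : H →ₗ[𝕜] H) := by
  set K := M.map (T : H →ₗ[𝕜] H)
  have hKM : K ≤ M := by
    rintro _ ⟨x, hx, rfl⟩
    exact hTM x hx
  have : CompleteSpace K := hcl.completeSpace_coe
  intro x hx
  set y := x - K.starProjection x
  have hyK : y ∈ Kᗮ := K.sub_starProjection_mem_orthogonal x
  have hyM : y ∈ M := M.sub_mem hx (hKM (K.starProjection_apply_mem x))
  have hy : y = 0 := by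
    refine hker y hyM ((inner_self_eq_zero (𝕜 := 𝕜)).mp ?_)
    rw [adjoint_inner_right]
    exact hyK _ ⟨adjoint T y, hT'M y hyM, rfl⟩
  rw [sub_eq_zero.mp hy]
  exact K.starProjection_apply_mem x

end

theorem stmt_6 {H : Type*} [NormedAddCommGroup H] [InnerProductSpace ℂ H] [CompleteSpace H]
    (T : H →L[ℂ] H)
    (han : (⨅ n : ℕ, LinearMap.range ((T ^ n : H →L[ℂ] H) : H →ₗ[ℂ] H)) = ⊥)
    (hap : approxPointSpectrum T ⊆ Metric.sphere (0 : ℂ) 1) :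
    ∀ M : Submodule ℂ H, IsClosed (M : Set H) →
      (∀ x ∈ M, T x ∈ M) → (∀ x ∈ M, adjoint T x ∈ M) →
      (∀ x ∈ M, adjoint T (T x) = T (adjoint T x)) → M = ⊥ := by
  intro M hMcl hTM hT'M hnormal
  obtain ⟨c, hc, hbelow⟩ := exists_bound_below_of_zero_notMem_approxPointSpectrum
    fun h ↦ by simpa using hap h
  have hker (y : H) (hy : y ∈ M) (hT'y : adjoint T y = 0) : y = 0 := by
    have := hbelow y
    rw [← norm_adjoint_apply_eq_norm_apply (hnormal y hy), hT'y, norm_zero] at this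
    exact norm_eq_zero.mp (le_antisymm (nonpos_of_mul_nonpos_right this hc) (norm_nonneg y))
  have hMT : M ≤ M.map (T : H →ₗ[ℂ] H) := M.le_map_of_isClosed_map_of_adjoint_injOn
    ((T.isClosedEmbedding_of_bound_below hc hbelow).isClosedMap _ hMcl) hTM hT'M hker
  rw [eq_bot_iff, ← han]
  exact le_iInf fun n ↦ toLinearMap_pow T n ▸ Submodule.le_range_pow_of_le_map hMT n
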